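/- arXiv:1711.06936 — 4 statements merged into one kernel-verified Lean document; each statement's English description precedes it below -/
import Mathlib

section
/- In any Hausdorff field H (a subfield of the ring C of germs at +∞ of continuous real functions), the dominance relation ≼ is total: for all f, g ∈ H, either f ≼ g or g ≼ f. -/
open Filter Set

abbrev GermAtTop : Type := Filter.Germ (Filter.atTop : Filter ℝ) ℝ

def IsContinuousGerm (f : GermAtTop) : Prop :=
  ∃ g : ℝ → ℝ, (g : GermAtTop) = f ∧ ∃ a : ℝ, ContinuousOn g (Set.Ioi a)

def ContinuousGerms : Subring GermAtTop where
  carrier := {f | IsContinuousGerm f}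
  zero_mem' := ⟨(fun _ => 0), rfl, 0, continuousOn_const⟩
  one_mem' := ⟨(fun _ => 1), rfl, 0, continuousOn_const⟩
  add_mem' := by
    rintro f g ⟨F, hF, a, ha⟩ ⟨G, hG, b, hb⟩
    exact ⟨F + G, by rw [← hF, ← hG]; rfl, max a b,
      (ha.mono (Set.Ioi_subset_Ioi (le_max_left a b))).add
      (hb.mono (Set.Ioi_subset_Ioi (le_max_right a b)))⟩
  neg_mem' := by
    rintro f ⟨F, hF, a, ha⟩
    exact ⟨-F, by rw [← hF]; rfl, a, ha.neg⟩
  mul_mem' := by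
    rintro f g ⟨F, hF, a, ha⟩ ⟨G, hG, b, hb⟩
    exact ⟨F * G, by rw [← hF, ← hG]; rfl, max a b,
      (ha.mono (Set.Ioi_subset_Ioi (le_max_left a b))).mul
      (hb.mono (Set.Ioi_subset_Ioi (le_max_right a b)))⟩

def Dominates (f g : GermAtTop) : Prop :=
  ∃ c : ℝ, 0 < c ∧ ∃ F G : ℝ → ℝ, (F : GermAtTop) = f ∧ (G : GermAtTop) = g ∧
    ∀ᶠ t in atTop, |F t| ≤ c * |G t|

/-- A Hausdorff field: a subfield of the ring C of germs at +∞ of continuous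
real-valued functions. -/
structure HausdorffField where
  toSubring : Subring GermAtTop
  cont : ∀ f ∈ toSubring, IsContinuousGerm f
  inv_mem : ∀ f ∈ toSubring, f ≠ 0 → ∃ g ∈ toSubring, f * g = 1

/-!
A nonzero element of a Hausdorff field has an inverse, so it vanishes at most on a bounded set;
being continuous, it then has eventually constant sign by the intermediate value theorem. Hence
the germ order is total on a Hausdorff field. Applied to `f * f - g * g`, this gives
`|f| ≤ |g|` or `|g| ≤ |f|` eventually.
-/

theorem eventually_gt_or_eventually_lt_of_continuousOn {α β : Type*}
    [ConditionallyCompleteLinearOrder α] [TopologicalSpace α] [OrderTopology α]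
    [DenselyOrdered α] [NoMaxOrder α] [LinearOrder β] [TopologicalSpace β]
    [OrderClosedTopology β] {f : α → β} {a : α} {b : β} (hf : ContinuousOn f (Ioi a))
    (hfb : ∀ᶠ t in atTop, f t ≠ b) :
    (∀ᶠ t in atTop, b < f t) ∨ (∀ᶠ t in atTop, f t < b) := by
  obtain ⟨c, hc⟩ := eventually_atTop.mp hfb
  have hmaps := isPreconnected_Ioi.mapsTo_Ioi_or_Iio (hf.mono (Ioi_subset_Ioi le_sup_left))
    fun t (ht : max a c < t) => hc t (le_sup_right.trans ht.le)
  exact hmaps.imp (fun h => (eventually_gt_atTop _).mono h)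
    (fun h => (eventually_gt_atTop _).mono h)

namespace HausdorffField

theorem eventually_ne_zero (H : HausdorffField) {F : ℝ → ℝ}
    (hF : (F : GermAtTop) ∈ H.toSubring) (hF0 : (F : GermAtTop) ≠ 0) :
    ∀ᶠ t in atTop, F t ≠ 0 := by
  obtain ⟨k, -, hFk⟩ := H.inv_mem _ hF hF0
  induction k using Germ.inductionOn with
  | h K =>
    have hFK : F * K =ᶠ[atTop] 1 := Germ.coe_eq.mp hFk
    filter_upwards [hFK] with t ht hFt
    simp [hFt] at ht

theorem nonneg_or_nonpos (H : HausdorffField) {q : GermAtTop} (hq : q ∈ H.toSubring) :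
    0 ≤ q ∨ q ≤ 0 := by
  rcases eq_or_ne q 0 with rfl | hq0
  · exact Or.inl le_rfl
  obtain ⟨F, rfl, a, hF⟩ := H.cont q hq
  exact (eventually_gt_or_eventually_lt_of_continuousOn hF (H.eventually_ne_zero hq hq0)).imp
    (fun h => Germ.coe_nonneg.mpr (h.mono fun _ => le_of_lt))
    (fun h => Germ.coe_le.mpr (h.mono fun _ => le_of_lt))

end HausdorffField

theorem dominates_of_mul_self_le {f g : GermAtTop} (h : f * f ≤ g * g) : Dominates f g := by
  induction f, g using Germ.inductionOn₂ with
  | h F G =>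
    refine ⟨1, one_pos, F, G, rfl, rfl, ?_⟩
    filter_upwards [Germ.coe_le.mp h] with t ht
    rw [one_mul]
    exact abs_le_iff_mul_self_le.mpr ht

/-- In a Hausdorff field the dominance relation is total. -/
theorem hausdorffField_dominates_total (H : HausdorffField) :
    ∀ f ∈ H.toSubring, ∀ g ∈ H.toSubring, Dominates f g ∨ Dominates g f := by
  intro f hf g hg
  rcases H.nonneg_or_nonpos (sub_mem (mul_mem hg hg) (mul_mem hf hf)) with h | h
  · exact Or.inl (dominates_of_mul_self_le (sub_nonneg.mp h))
  · exact Or.inr (dominates_of_mul_self_le (sub_nonpos.mp h))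
end

section
/- Every Hausdorff field H becomes a linearly ordered field under the ordering: f > 0 iff f(t) > 0 eventually. That is, this relation makes H a linear order compatible with the field operations. -/
open Filter Set

/-- f > 0 in the sense: f(t) > 0 eventually. -/
def EvPos (f : GermAtTop) : Prop :=
  ∃ g : ℝ → ℝ, (g : GermAtTop) = f ∧ ∀ᶠ t in atTop, 0 < g t

/-! A nonzero element of a Hausdorff field is invertible, so its representatives are eventually
nonzero; being continuous on a ray, they then have eventually constant sign by the intermediate
value theorem. Sums and products of eventually positive functions are eventually positive. -/

lemma IsPreconnected.pos_or_neg_of_ne_zero {α : Type*} [TopologicalSpace α] {s : Set α}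
    (hs : IsPreconnected s) {F : α → ℝ} (hF : ContinuousOn F s) (hne : ∀ x ∈ s, F x ≠ 0) :
    (∀ x ∈ s, 0 < F x) ∨ (∀ x ∈ s, F x < 0) := by
  by_contra! h
  obtain ⟨⟨x, hx, hFx⟩, ⟨y, hy, hFy⟩⟩ := h
  have hzero : (0 : ℝ) ∈ Icc (F x) (F y) := ⟨hFx, hFy⟩
  obtain ⟨z, hz, hFz⟩ :=
    (hs.image F hF).Icc_subset (mem_image_of_mem F hx) (mem_image_of_mem F hy) hzero
  exact hne z hz hFz

lemma ContinuousOn.eventually_pos_or_eventually_neg {F : ℝ → ℝ} {a : ℝ}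
    (hF : ContinuousOn F (Ioi a)) (hne : ∀ᶠ t in atTop, F t ≠ 0) :
    (∀ᶠ t in atTop, 0 < F t) ∨ (∀ᶠ t in atTop, F t < 0) := by
  obtain ⟨b, hb⟩ := eventually_atTop.1 ((eventually_gt_atTop a).and hne)
  have hcont : ContinuousOn F (Ici b) := hF.mono fun t ht => (hb t ht).1
  exact (isPreconnected_Ici.pos_or_neg_of_ne_zero hcont fun t ht => (hb t ht).2).imp
    (fun h => eventually_atTop.2 ⟨b, h⟩) (fun h => eventually_atTop.2 ⟨b, h⟩)

lemma Filter.Germ.eventually_ne_zero_of_mul_eq_one {α : Type*} {l : Filter α} {F : α → ℝ}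
    {g : Germ l ℝ} (h : (F : Germ l ℝ) * g = 1) : ∀ᶠ t in l, F t ≠ 0 := by
  induction g using Filter.Germ.inductionOn with
  | h G =>
    filter_upwards [Germ.coe_eq.1 h] with t ht hFt
    simp [hFt] at ht

lemma evPos_coe (F : ℝ → ℝ) : EvPos (F : GermAtTop) ↔ ∀ᶠ t in atTop, 0 < F t :=
  ⟨fun ⟨_, hG, hpos⟩ => hpos.mp <| (Germ.coe_eq.1 hG).mono fun _ ht h => ht ▸ h,
    fun h => ⟨F, rfl, h⟩⟩

lemma not_evPos_and_evPos_neg (f : GermAtTop) : ¬ (EvPos f ∧ EvPos (-f)) := by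
  induction f using Filter.Germ.inductionOn with
  | h F =>
    rintro ⟨hpos, hneg⟩
    rw [← Germ.coe_neg, evPos_coe] at hneg
    rw [evPos_coe] at hpos
    obtain ⟨t, ht, ht'⟩ := (hpos.and hneg).exists
    simp only [Pi.neg_apply] at ht'
    linarith

lemma not_evPos_zero : ¬ EvPos 0 := fun h =>
  not_evPos_and_evPos_neg 0 ⟨h, by rwa [neg_zero]⟩

lemma EvPos.add {f g : GermAtTop} (hf : EvPos f) (hg : EvPos g) : EvPos (f + g) := by
  obtain ⟨F, rfl, hF⟩ := hf
  obtain ⟨G, rfl, hG⟩ := hg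
  exact ⟨F + G, rfl, hF.and hG |>.mono fun t ht => add_pos ht.1 ht.2⟩

lemma EvPos.mul {f g : GermAtTop} (hf : EvPos f) (hg : EvPos g) : EvPos (f * g) := by
  obtain ⟨F, rfl, hF⟩ := hf
  obtain ⟨G, rfl, hG⟩ := hg
  exact ⟨F * G, rfl, hF.and hG |>.mono fun t ht => mul_pos ht.1 ht.2⟩

lemma HausdorffField.evPos_or_evPos_neg (H : HausdorffField) {f : GermAtTop}
    (hf : f ∈ H.toSubring) (hf0 : f ≠ 0) : EvPos f ∨ EvPos (-f) := by
  obtain ⟨F, rfl, a, hF⟩ := H.cont f hf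
  obtain ⟨g, -, hFg⟩ := H.inv_mem _ hf hf0
  rw [← Germ.coe_neg, evPos_coe, evPos_coe]
  simpa only [Pi.neg_apply, neg_pos] using
    hF.eventually_pos_or_eventually_neg (Germ.eventually_ne_zero_of_mul_eq_one hFg)

/-- Every Hausdorff field becomes a linearly ordered field under f > 0 iff f(t) > 0
eventually: the positivity predicate satisfies trichotomy on H and is compatible with
addition and multiplication. -/
theorem hausdorffField_linearly_ordered (H : HausdorffField) :
    (∀ f ∈ H.toSubring,
      (EvPos f ∧ f ≠ 0 ∧ ¬ EvPos (-f)) ∨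
      (f = 0 ∧ ¬ EvPos f ∧ ¬ EvPos (-f)) ∨
      (EvPos (-f) ∧ f ≠ 0 ∧ ¬ EvPos f)) ∧
    (∀ f ∈ H.toSubring, ∀ g ∈ H.toSubring,
      EvPos f → EvPos g → EvPos (f + g) ∧ EvPos (f * g)) := by
  refine ⟨fun f hf => ?_, fun f _ g _ hf hg => ⟨hf.add hg, hf.mul hg⟩⟩
  rcases eq_or_ne f 0 with rfl | hf0
  · rw [neg_zero]
    exact Or.inr (Or.inl ⟨rfl, not_evPos_zero, not_evPos_zero⟩)
  rcases H.evPos_or_evPos_neg hf hf0 with hpos | hneg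
  · exact Or.inl ⟨hpos, hf0, fun hneg => not_evPos_and_evPos_neg f ⟨hpos, hneg⟩⟩
  · exact Or.inr (Or.inr ⟨hneg, hf0, fun hpos => not_evPos_and_evPos_neg f ⟨hpos, hneg⟩⟩)
end

section
/- If f is a nonzero element of the subring ℝ[x, exp x, log x] of the germ ring C, then there exist k, l, m ∈ ℕ such that f ≍ x^k · e^{lx} · (log x)^m, where ≍ denotes mutual dominance (f ≼ g and g ≼ f). -/
open Filter Set

/-- The germ of the identity function x. -/
noncomputable def Xg : GermAtTop := ((id : ℝ → ℝ) : GermAtTop)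
/-- The germ of exp x. -/
noncomputable def Eg : GermAtTop := ((Real.exp : ℝ → ℝ) : GermAtTop)
/-- The germ of log x. -/
noncomputable def Lg : GermAtTop := ((Real.log : ℝ → ℝ) : GermAtTop)

/-- The subring ℝ[x, exp x, log x] of C. -/
noncomputable def RxExpLog : Subring GermAtTop :=
  Subring.closure ({Xg, Eg, Lg} ∪ Set.range fun r : ℝ => (((fun _ => r) : ℝ → ℝ) : GermAtTop))

/-! Every element of ℝ[x, exp x, log x] is the germ of a real linear combination of the
monomials x^k e^{lx} (log x)^m. Ordered lexicographically by (l, k, m), each monomial is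
little-o of every larger one, so a nonzero combination is Θ of the largest monomial occurring in
it. -/

open Asymptotics Real

noncomputable def expLogMonomial (i : ℕ × ℕ × ℕ) : ℝ → ℝ :=
  fun t => t ^ i.1 * exp t ^ i.2.1 * log t ^ i.2.2

lemma expLogMonomial_add (i j : ℕ × ℕ × ℕ) :
    expLogMonomial (i + j) = expLogMonomial i * expLogMonomial j := by
  funext t
  simp only [expLogMonomial, Prod.fst_add, Prod.snd_add, pow_add, Pi.mul_apply]
  ring

def expLogMonomials : Submonoid (ℝ → ℝ) where
  carrier := range expLogMonomial
  one_mem' := ⟨0, by funext t; simp [expLogMonomial]⟩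
  mul_mem' := by
    rintro _ _ ⟨i, rfl⟩ ⟨j, rfl⟩
    exact ⟨i + j, expLogMonomial_add i j⟩

lemma coe_expLogMonomial (k l m : ℕ) :
    ((expLogMonomial (k, l, m) : ℝ → ℝ) : GermAtTop) = Xg ^ k * Eg ^ l * Lg ^ m := by
  simp only [Xg, Eg, Lg, ← Germ.coe_pow, ← Germ.coe_mul]
  rfl

lemma RxExpLog_le_map_adjoin :
    RxExpLog ≤ (Algebra.adjoin ℝ {id, exp, log}).toSubring.map (Germ.coeRingHom atTop) := by
  refine Subring.closure_le.2 (union_subset ?_ ?_)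
  · rintro _ (rfl | rfl | rfl)
    exacts [⟨id, Algebra.subset_adjoin (by simp), rfl⟩,
      ⟨exp, Algebra.subset_adjoin (by simp), rfl⟩, ⟨log, Algebra.subset_adjoin (by simp), rfl⟩]
  · rintro _ ⟨r, rfl⟩
    exact ⟨algebraMap ℝ _ r, Subalgebra.algebraMap_mem _ r, rfl⟩

lemma adjoin_id_exp_log_le_span_expLogMonomial :
    Subalgebra.toSubmodule (Algebra.adjoin ℝ {id, exp, log}) ≤
      Submodule.span ℝ (range expLogMonomial) := by
  have hgen : ({id, exp, log} : Set (ℝ → ℝ)) ⊆ expLogMonomials := by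
    rintro _ (rfl | rfl | rfl)
    exacts [⟨(1, 0, 0), by funext t; simp [expLogMonomial]⟩,
      ⟨(0, 1, 0), by funext t; simp [expLogMonomial]⟩,
      ⟨(0, 0, 1), by funext t; simp [expLogMonomial]⟩]
  rw [Algebra.adjoin_eq_span]
  exact Submodule.span_mono (SetLike.coe_subset_coe.2 (Submonoid.closure_le.2 hgen))

lemma expLogMonomial_isBigO_of_le {i j : ℕ × ℕ × ℕ} (h : i ≤ j) :
    expLogMonomial i =O[atTop] expLogMonomial j := by
  refine IsBigO.of_bound 1 ?_
  filter_upwards [eventually_ge_atTop 1, tendsto_log_atTop.eventually_ge_atTop 1] with t ht hlt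
  have hx : 1 ≤ ‖t‖ := ht.trans (le_abs_self t)
  have he : 1 ≤ ‖exp t‖ := (one_le_exp (by linarith)).trans (le_abs_self _)
  have hl : 1 ≤ ‖log t‖ := hlt.trans (le_abs_self _)
  simp only [expLogMonomial, norm_mul, norm_pow, one_mul]
  gcongr
  exacts [h.1, h.2.1, h.2.2]

lemma expLogMonomial_isLittleO_of_log_lt {k l m M : ℕ} (h : m < M) :
    expLogMonomial (k, l, m) =o[atTop] expLogMonomial (k, l, M) :=
  (isBigO_refl (fun t => t ^ k * exp t ^ l) atTop).mul_isLittleO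
    ((isLittleO_pow_pow_atTop_of_lt h).comp_tendsto tendsto_log_atTop)

lemma expLogMonomial_isLittleO_succ_left (k l m : ℕ) :
    expLogMonomial (k, l, m) =o[atTop] expLogMonomial (k + 1, l, 0) :=
  ((isBigO_refl (fun t => t ^ k * exp t ^ l) atTop).mul_isLittleO
    isLittleO_pow_log_id_atTop).congr_right fun t => by simp [expLogMonomial]; ring

lemma expLogMonomial_isLittleO_exp_succ (k l m : ℕ) :
    expLogMonomial (k, l, m) =o[atTop] expLogMonomial (0, l + 1, 0) := by
  have hpolylog : (fun t => t ^ k * log t ^ m) =o[atTop] exp :=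
    (((isBigO_refl (fun t : ℝ => t ^ k) atTop).mul isLittleO_pow_log_id_atTop.isBigO)
      |>.trans_isLittleO (isLittleO_pow_exp_atTop (n := k + 1))).congr_right fun t => by simp
  exact (hpolylog.mul_isBigO (isBigO_refl (fun t => exp t ^ l) atTop)).congr
    (fun t => by simp only [expLogMonomial]; ring) (fun t => by simp [expLogMonomial]; ring)

def lexKey (i : ℕ × ℕ × ℕ) : ℕ ×ₗ ℕ ×ₗ ℕ := toLex (i.2.1, toLex (i.1, i.2.2))

lemma lexKey_injective : Function.Injective lexKey := by
  rintro ⟨k, l, m⟩ ⟨K, L, M⟩ h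
  simp_all [lexKey]

lemma expLogMonomial_isLittleO_of_lexKey_lt {i j : ℕ × ℕ × ℕ} (h : lexKey i < lexKey j) :
    expLogMonomial i =o[atTop] expLogMonomial j := by
  obtain ⟨k, l, m⟩ := i
  obtain ⟨K, L, M⟩ := j
  simp only [lexKey, Prod.Lex.lt_iff, ofLex_toLex] at h
  rcases h with hl | ⟨rfl, hk | ⟨rfl, hm⟩⟩
  · exact (expLogMonomial_isLittleO_exp_succ k l m).trans_isBigO
      (expLogMonomial_isBigO_of_le ⟨Nat.zero_le _, hl, Nat.zero_le _⟩)
  · exact (expLogMonomial_isLittleO_succ_left k l m).trans_isBigO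
      (expLogMonomial_isBigO_of_le ⟨hk, le_rfl, Nat.zero_le _⟩)
  · exact expLogMonomial_isLittleO_of_log_lt hm

theorem Asymptotics.isTheta_sum_smul_of_isLittleO {ι α 𝕜 E : Type*} [NormedField 𝕜]
    [SeminormedAddCommGroup E] [NormedSpace 𝕜 E] {l : Filter α} {s : Finset ι} {c : ι → 𝕜}
    {g : ι → α → E} {j : ι} (hj : j ∈ s) (hcj : c j ≠ 0)
    (h : ∀ i ∈ s, i ≠ j → g i =o[l] g j) :
    (∑ i ∈ s, c i • g i) =Θ[l] g j := by
  classical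
  rw [← Finset.sum_erase_add s _ hj]
  refine IsLittleO.add_isTheta (IsLittleO.sum fun i hi => ?_) ?_
  · exact (h i (Finset.mem_of_mem_erase hi) (Finset.ne_of_mem_erase hi)).const_smul_left (c i)
  · exact (isTheta_const_smul_left hcj).2 (isTheta_refl _ _)

lemma dominates_of_isBigO {F G : ℝ → ℝ} (h : F =O[atTop] G) :
    Dominates (F : GermAtTop) (G : GermAtTop) := by
  obtain ⟨c, hc, hFG⟩ := h.exists_pos
  exact ⟨c, hc, F, G, rfl, rfl, by simpa only [Real.norm_eq_abs] using hFG.bound⟩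

/-- Every nonzero f ∈ ℝ[x, exp x, log x] satisfies f ≍ x^k e^{l x} (log x)^m for
some k, l, m ∈ ℕ. -/
theorem asymp_monomial (f : GermAtTop) (hf : f ∈ RxExpLog) (hf0 : f ≠ 0) :
    ∃ k l m : ℕ, Dominates f (Xg ^ k * Eg ^ l * Lg ^ m) ∧
      Dominates (Xg ^ k * Eg ^ l * Lg ^ m) f := by
  obtain ⟨F, hF, rfl⟩ := RxExpLog_le_map_adjoin hf
  obtain ⟨c, rfl⟩ :=
    Finsupp.mem_span_range_iff_exists_finsupp.1 (adjoin_id_exp_log_le_span_expLogMonomial hF)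
  have hc : c.support.Nonempty :=
    Finsupp.support_nonempty_iff.2 fun hc => hf0 (by simp [hc])
  obtain ⟨top, htop, hmax⟩ := c.support.exists_max_image lexKey hc
  have hΘ : (c.sum fun i a => a • expLogMonomial i) =Θ[atTop] expLogMonomial top :=
    isTheta_sum_smul_of_isLittleO htop (Finsupp.mem_support_iff.1 htop) fun i hi hne =>
      expLogMonomial_isLittleO_of_lexKey_lt ((hmax i hi).lt_of_ne (lexKey_injective.ne hne))
  refine ⟨top.1, top.2.1, top.2.2, ?_, ?_⟩ <;> rw [← coe_expLogMonomial]
  exacts [dominates_of_isBigO hΘ.isBigO, dominates_of_isBigO hΘ.symm.isBigO]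
end

section
/- In the Hahn field R[[M]] over ℝ with monomial group M, for every series ε with ε ≺ 1 (i.e., all monomials in the support of ε are < 1), the family (εⁿ/n!)_{n∈ℕ} is summable, and E(ε) := Σ_n εⁿ/n! satisfies E(ε+δ) = E(ε)·E(δ) for all ε, δ ≺ 1. -/
/-!
For `ε ≺ 1` the powers `εⁿ` form a summable family (Neumann's lemma, packaged in Mathlib as
`HahnSeries.SummableFamily.powers`), hence so do the `εⁿ/n!`. The functional equation is a Cauchy
product: by the binomial theorem `(ε + δ)ⁿ/n! = ∑_{i+j=n} (εⁱ/i!)(δʲ/j!)`, and regrouping the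
summable double family `((εⁱ/i!)(δʲ/j!))_{i,j}` along antidiagonals does not change its sum,
because each coefficient of the sum involves only finitely many of its terms.
-/

open Finset in
theorem finsum_sum_antidiagonal {A M : Type*} [AddCommMonoid A] [HasAntidiagonal A]
    [AddCommMonoid M] (f : A × A → M) (hf : (Function.support f).Finite) :
    ∑ᶠ n, ∑ p ∈ antidiagonal n, f p = ∑ᶠ p, f p := by
  classical
  set S := hf.toFinset
  have h_fiber (n : A) : ∑ p ∈ antidiagonal n, f p = ∑ p ∈ S with p.1 + p.2 = n, f p :=
    (sum_subset (fun p hp => by simp_all) (fun p _ hp => by simp_all [S])).symm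
  simp_rw [h_fiber]
  rw [finsum_eq_sum_of_support_subset _
      (S.support_of_fiberwise_sum_subset_image f fun p => p.1 + p.2),
    sum_fiberwise_of_maps_to (g := fun p : A × A => p.1 + p.2) fun p hp => mem_image_of_mem _ hp,
    finsum_eq_sum_of_support_subset f hf.coe_toFinset.superset]

open Finset Nat in
theorem inv_factorial_smul_add_pow {R A : Type*} [Field R] [CharZero R] [CommRing A]
    [Algebra R A] (x y : A) (n : ℕ) :
    (n ! : R)⁻¹ • (x + y) ^ n =
      ∑ p ∈ antidiagonal n, ((p.1 ! : R)⁻¹ • x ^ p.1) * ((p.2 ! : R)⁻¹ • y ^ p.2) := by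
  rw [(Commute.all x y).add_pow', smul_sum]
  refine sum_congr rfl fun p hp => ?_
  obtain rfl := mem_antidiagonal.mp hp
  rw [smul_mul_smul_comm, ← Nat.cast_smul_eq_nsmul R, smul_smul, Nat.cast_add_choose,
    div_eq_mul_inv, inv_mul_cancel_left₀ (Nat.cast_ne_zero.mpr (factorial_ne_zero _)), mul_inv]

namespace HahnSeries

variable {Γ R : Type*}

theorem zero_lt_orderTop_of_support_subset [AddCommMonoid Γ] [LinearOrder Γ] [Zero R]
    {x : HahnSeries Γ R} (hx : (x.support : Set Γ) ⊆ Set.Ioi 0) : 0 < x.orderTop := by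
  rcases eq_or_ne x 0 with rfl | hne
  · simp
  · rw [orderTop_of_ne_zero hne]
    exact WithTop.coe_lt_coe.mpr (hx (x.isWF_support.min_mem (support_nonempty_iff.mpr hne)))

theorem lt_orderTop_add [LinearOrder Γ] [AddMonoid R] {x y : HahnSeries Γ R} {a : WithTop Γ}
    (hx : a < x.orderTop) (hy : a < y.orderTop) : a < (x + y).orderTop :=
  (lt_min hx hy).trans_le min_orderTop_le_orderTop_add

namespace SummableFamily

open Finset in
theorem hsum_eq_hsum_mul_hsum_of_antidiagonal [AddCommMonoid Γ] [PartialOrder Γ]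
    [IsOrderedCancelAddMonoid Γ] [Semiring R] {s t u : SummableFamily Γ R ℕ}
    (hu : ∀ n, u n = ∑ p ∈ antidiagonal n, s p.1 * t p.2) :
    u.hsum = s.hsum * t.hsum := by
  rw [← hsum_mul]
  ext g
  simp only [coeff_hsum, hu, coeff_sum]
  exact finsum_sum_antidiagonal _ ((s.mul t).finite_co_support g)

variable [AddCommMonoid Γ] [LinearOrder Γ] [IsOrderedCancelAddMonoid Γ] [Field R]

/-- `powers x` is a junk family unless `0 < x.orderTop`, hence the hypothesis of
`expFamily_apply`. -/
noncomputable def expFamily (x : HahnSeries Γ R) : SummableFamily Γ R ℕ :=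
  smulFamily (fun n => (n.factorial : R)⁻¹) (powers x)

theorem expFamily_apply {x : HahnSeries Γ R} (hx : 0 < x.orderTop) (n : ℕ) :
    expFamily x n = (n.factorial : R)⁻¹ • x ^ n := by
  rw [expFamily, smulFamily_toFun, powers_of_orderTop_pos hx]

theorem hsum_expFamily_add [CharZero R] {x y : HahnSeries Γ R} (hx : 0 < x.orderTop)
    (hy : 0 < y.orderTop) :
    (expFamily (x + y)).hsum = (expFamily x).hsum * (expFamily y).hsum := by
  refine hsum_eq_hsum_mul_hsum_of_antidiagonal fun n => ?_
  rw [expFamily_apply (lt_orderTop_add hx hy), inv_factorial_smul_add_pow]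
  simp only [expFamily_apply hx, expFamily_apply hy]

end SummableFamily

end HahnSeries

open HahnSeries HahnSeries.SummableFamily

/-- In the Hahn field ℝ[[M]], for every infinitesimal ε (all monomials of its support
are ≺ 1, i.e. all exponents are positive), the family (εⁿ/n!) is summable, and
E(ε) := Σ εⁿ/n! satisfies E(ε+δ) = E(ε)·E(δ). -/
theorem hahn_exp_infinitesimal (Γ : Type*) [AddCommGroup Γ] [LinearOrder Γ] [IsOrderedAddMonoid Γ]
    (ε δ : HahnSeries Γ ℝ)
    (hε : (ε.support : Set Γ) ⊆ Set.Ioi 0) (hδ : (δ.support : Set Γ) ⊆ Set.Ioi 0) :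
    (∀ g : Γ, {n : ℕ | (((n.factorial : ℝ)⁻¹) • ε ^ n).coeff g ≠ 0}.Finite) ∧
    (⋃ n : ℕ, ((((n.factorial : ℝ)⁻¹) • ε ^ n).support : Set Γ)).IsPWO ∧
    (∀ A B C : HahnSeries Γ ℝ,
      (∀ g : Γ, A.coeff g = ∑ᶠ n : ℕ, (((n.factorial : ℝ)⁻¹) • ε ^ n).coeff g) →
      (∀ g : Γ, B.coeff g = ∑ᶠ n : ℕ, (((n.factorial : ℝ)⁻¹) • δ ^ n).coeff g) →
      (∀ g : Γ, C.coeff g = ∑ᶠ n : ℕ, (((n.factorial : ℝ)⁻¹) • (ε + δ) ^ n).coeff g) →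
      C = A * B) := by
  have hε₀ := zero_lt_orderTop_of_support_subset hε
  have hδ₀ := zero_lt_orderTop_of_support_subset hδ
  have eq_hsum_expFamily {x : HahnSeries Γ ℝ} (hx : 0 < x.orderTop) (X : HahnSeries Γ ℝ)
      (hX : ∀ g, X.coeff g = ∑ᶠ n : ℕ, (((n.factorial : ℝ)⁻¹) • x ^ n).coeff g) :
      X = (expFamily x).hsum := by
    ext g
    simp only [hX, coeff_hsum, expFamily_apply hx]
  refine ⟨fun g => ?_, ?_, fun A B C hA hB hC => ?_⟩
  · simpa only [expFamily_apply hε₀, Function.support]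
      using Set.finite_coe_iff.mp ((expFamily ε).finite_co_support g)
  · simpa only [expFamily_apply hε₀] using (expFamily ε).isPWO_iUnion_support
  · rw [eq_hsum_expFamily hε₀ A hA, eq_hsum_expFamily hδ₀ B hB,
      eq_hsum_expFamily (lt_orderTop_add hε₀ hδ₀) C hC, hsum_expFamily_add hε₀ hδ₀]
end
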